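/- arXiv:2507.15999 — 6 statements merged into one kernel-verified Lean document; each statement's English description precedes it below -/
import Mathlib

section
/- Let G be a finite group, N = Σ_{g∈G} g ∈ ℤG, r an integer coprime to |G|, and θ ∈ Aut(G). Then the Swan module (N, r) ≤ ℤG satisfies (N,r)_θ ≅ (N,r) as ℤG-modules. -/
/-- Let `G` be a finite group, `N = Σ_{g∈G} g ∈ ℤG`, `r` an integer coprime to `|G|`, and
`θ ∈ Aut(G)`. Then the Swan module `(N, r) ≤ ℤG` satisfies `(N,r)_θ ≅ (N,r)`: there is an
additive automorphism `e` of the ideal `(N, r)` intertwining the `θ`-twisted `G`-action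
with the standard one. -/
theorem stmt_2 (G : Type*) [Group G] [Fintype G] (θ : G ≃* G)
    (r : ℤ) (hr : IsCoprime r (Fintype.card G : ℤ))
    (N : MonoidAlgebra ℤ G)
    (hN : N = ∑ g : G, MonoidAlgebra.of ℤ G g)
    (S : Ideal (MonoidAlgebra ℤ G))
    (hS : S = Ideal.span {N, (r : MonoidAlgebra ℤ G)}) :
    ∃ e : S ≃+ S,
      ∀ (g : G) (m : S),
        e ⟨MonoidAlgebra.of ℤ G (θ g) * (m : MonoidAlgebra ℤ G),
            S.mul_mem_left _ m.2⟩
          = ⟨MonoidAlgebra.of ℤ G g * ((e m : S) : MonoidAlgebra ℤ G),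
            S.mul_mem_left _ (e m).2⟩ := by
  set φ : MonoidAlgebra ℤ G ≃ₐ[ℤ] MonoidAlgebra ℤ G :=
    MonoidAlgebra.domCongr ℤ ℤ θ.symm with hφ
  have hφN : φ N = N := by
    simp only [hN, map_sum]
    rw [← Equiv.sum_comp θ.symm.toEquiv (fun g => MonoidAlgebra.of ℤ G g)]
    refine Finset.sum_congr rfl fun g _ => ?_
    simp [hφ, MonoidAlgebra.of_apply]
  have hφr : φ (r : MonoidAlgebra ℤ G) = (r : MonoidAlgebra ℤ G) := map_intCast φ r
  have hφr' : φ.symm (r : MonoidAlgebra ℤ G) = (r : MonoidAlgebra ℤ G) := map_intCast φ.symm r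
  have hφN' : φ.symm N = N := by conv_lhs => rw [← hφN]; simp
  have hmap : Ideal.map (φ : MonoidAlgebra ℤ G →+* MonoidAlgebra ℤ G) S = S := by
    rw [hS, Ideal.map_span]
    congr 1
    rw [Set.image_pair]
    simp only [RingHom.coe_coe]
    rw [hφN, hφr]
  have hmap' : Ideal.map (φ.symm : MonoidAlgebra ℤ G →+* MonoidAlgebra ℤ G) S = S := by
    rw [hS, Ideal.map_span]
    congr 1
    rw [Set.image_pair]
    simp only [RingHom.coe_coe]
    rw [hφN', hφr']
  have key : ∀ x ∈ S, φ x ∈ S := fun x hx => hmap ▸ Ideal.mem_map_of_mem _ hx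
  have key' : ∀ x ∈ S, φ.symm x ∈ S := fun x hx => hmap' ▸ Ideal.mem_map_of_mem _ hx
  refine ⟨{ toFun := fun m => ⟨φ m, key m m.2⟩,
            invFun := fun m => ⟨φ.symm m, key' m m.2⟩,
            left_inv := fun m => by ext; simp,
            right_inv := fun m => by ext; simp,
            map_add' := fun a b => by ext; simp }, fun g m => ?_⟩
  ext
  simp only [AddEquiv.coe_mk, Equiv.coe_fn_mk]
  rw [map_mul]
  congr 1
  simp [hφ, MonoidAlgebra.of_apply]
end

section
/- Let n ≥ 2, k ≥ 0, and let n_1, …, n_k be even integers with 1 ≤ n_i ≤ 2n−2. Set n_0 = 1 − Σ n_i. Then the group presented by ⟨x, y | x^n y^{-2}, x^{n_1}(yxy^{-1})^{-n_k} x^{n_2}(yxy^{-1})^{-n_{k-1}} ⋯ x^{n_k}(yxy^{-1})^{-n_1} x^{n_0} (yxy^{-1})^{2-n_0}⟩ is isomorphic to Q_{4n}. -/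
/-!
Write X = x, Y = y and B = YXY⁻¹. Once Y² = Xⁿ, conjugation by Y is an automorphism swapping X
and B. Since the B-exponents of the long relator are the reversed negated X-exponents, it maps the
product part of the relator to its inverse, and comparing the relator with its image forces
B² = X⁻². With all nᵢ even, the relator then collapses to a conjugate of BX, so B = X⁻¹. Hence the
group is ⟨X, Y | YXY⁻¹ = X⁻¹, Y² = Xⁿ⟩, the standard presentation of Q₄ₙ; X²ⁿ = 1 is automatic
because Xⁿ = Y² commutes with Y.
-/

theorem List.prod_ofFn_inv_rev {G : Type*} [Group G] {k : ℕ} (g : Fin k → G) :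
    (List.ofFn fun j => (g j.rev)⁻¹).prod = (List.ofFn g).prod⁻¹ := by
  rw [List.prod_inv_reverse, List.map_ofFn, List.ofFn_eq_map, List.ofFn_eq_map,
    ← List.map_reverse, List.finRange_reverse, List.map_map]
  rfl

theorem List.prod_ofFn_zpow {G : Type*} [Group G] {k : ℕ} (X : G) (e : Fin k → ℤ) :
    (List.ofFn fun j => X ^ e j).prod = X ^ ∑ j, e j := by
  induction k with
  | zero => simp
  | succ k ih => simp [List.ofFn_succ, Fin.sum_univ_succ, zpow_add, ih]

theorem zpow_eq_zpow_of_intCast_eq {G : Type*} [Group G] {X : G} {m : ℕ} (hX : X ^ m = 1)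
    {a b : ℤ} (h : (a : ZMod m) = b) : X ^ a = X ^ b := by
  obtain ⟨c, hc⟩ := (ZMod.intCast_eq_intCast_iff_dvd_sub a b m).1 h
  rw [← sub_add_cancel b a, zpow_add, hc, zpow_mul, zpow_natCast, hX, one_zpow, one_mul]

section ConjInv

variable {G : Type*} [Group G] {X Y : G}

theorem zpow_mul_eq_mul_zpow_neg_of_conj_eq_inv (hconj : Y * X * Y⁻¹ = X⁻¹) (m : ℤ) :
    X ^ m * Y = Y * X ^ (-m) := by
  have h : Y * X ^ (-m) * Y⁻¹ = X ^ m := by rw [← conj_zpow, hconj, inv_zpow', neg_neg]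
  rw [← h]
  group

theorem pow_two_mul_eq_one_of_conj_eq_inv {n : ℕ} (hconj : Y * X * Y⁻¹ = X⁻¹)
    (hsq : Y ^ 2 = X ^ n) : X ^ (2 * n) = 1 := by
  have hcomm : Y * X ^ n * Y⁻¹ = X ^ n := by rw [← hsq]; group
  rw [← conj_pow, hconj, inv_pow] at hcomm
  rw [two_mul, pow_add, mul_eq_one_iff_eq_inv, hcomm]

end ConjInv

namespace QuaternionGroup

variable {n : ℕ}

theorem a_one_zpow (m : ℤ) : (a 1 : QuaternionGroup n) ^ m = a m := by
  rcases m with m | m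
  · simp [a_one_pow]
  · rw [zpow_negSucc, a_one_pow, Int.cast_negSucc]
    rfl

theorem xa_mul_a_mul_xa_inv (i j : ZMod (2 * n)) : xa i * a j * (xa i)⁻¹ = (a j)⁻¹ := by
  show xa i * a j * xa ((n : ZMod (2 * n)) + i) = a (-j)
  rw [xa_mul_a, xa_mul_xa]
  congr 1
  have h2n : ((2 * n : ℕ) : ZMod (2 * n)) = 0 := ZMod.natCast_self _
  push_cast at h2n
  linear_combination h2n

variable {G : Type*} [Group G] {X Y : G}

/-- Exponents are lifted with `ZMod.cast` rather than `ZMod.val`, which would be wrong for `n = 0`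
(where `ZMod 0 = ℤ`). -/
def lift (hconj : Y * X * Y⁻¹ = X⁻¹) (hsq : Y ^ 2 = X ^ n) : QuaternionGroup n →* G where
  toFun
    | a i => X ^ (i.cast : ℤ)
    | xa i => Y * X ^ (i.cast : ℤ)
  map_one' := by
    show X ^ ((0 : ZMod (2 * n)).cast : ℤ) = 1
    rw [ZMod.cast_zero, zpow_zero]
  map_mul' := by
    have hX {a b : ℤ} (h : (a : ZMod (2 * n)) = b) : X ^ a = X ^ b :=
      zpow_eq_zpow_of_intCast_eq (pow_two_mul_eq_one_of_conj_eq_inv hconj hsq) h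
    have hXY := zpow_mul_eq_mul_zpow_neg_of_conj_eq_inv hconj
    rintro (i | i) (j | j)
    · show X ^ _ = X ^ _ * X ^ _
      rw [← zpow_add]
      exact hX (by push_cast [ZMod.intCast_zmod_cast]; rfl)
    · show Y * X ^ _ = X ^ _ * (Y * X ^ _)
      rw [← mul_assoc, hXY, mul_assoc, ← zpow_add]
      exact congrArg _ (hX (by push_cast [ZMod.intCast_zmod_cast]; ring))
    · show Y * X ^ _ = Y * X ^ _ * X ^ _
      rw [mul_assoc, ← zpow_add]
      exact congrArg _ (hX (by push_cast [ZMod.intCast_zmod_cast]; rfl))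
    · show X ^ _ = Y * X ^ (i.cast : ℤ) * (Y * X ^ (j.cast : ℤ))
      have hY2 (c d : ℤ) : Y * (Y * X ^ c) * X ^ d = X ^ (n + c + d : ℤ) := by
        rw [zpow_add, zpow_add, zpow_natCast, ← hsq, sq]
        group
      rw [← mul_assoc, mul_assoc Y, hXY, hY2]
      exact hX (by push_cast [ZMod.intCast_zmod_cast]; ring)

variable (hconj : Y * X * Y⁻¹ = X⁻¹) (hsq : Y ^ 2 = X ^ n)

@[simp]
theorem lift_a (i : ZMod (2 * n)) : lift hconj hsq (a i) = X ^ (i.cast : ℤ) := rfl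

@[simp]
theorem lift_xa (i : ZMod (2 * n)) : lift hconj hsq (xa i) = Y * X ^ (i.cast : ℤ) := rfl

theorem lift_a_intCast (m : ℤ) : lift hconj hsq (a m) = X ^ m :=
  zpow_eq_zpow_of_intCast_eq (pow_two_mul_eq_one_of_conj_eq_inv hconj hsq)
    (ZMod.intCast_zmod_cast _)

end QuaternionGroup

section Relator

variable {G H : Type*} [Group G] [Group H] {k : ℕ}

/-- The relator `a^{n_1} b^{m_1} ⋯ a^{n_{k+1}} b^{m_{k+1}}` of `𝒫_n(n_1,…,n_k; −n_k,…,−n_1)` with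
`a = X`, `b = B`, `n_i = e i` and `n_{k+1} = m`; then `m_{k+1} = 1 + ∑ n_i` is `2 - m` as soon as
`m = 1 - ∑ n_i`. -/
def presentationRelator (e : Fin k → ℤ) (m : ℤ) (X B : G) : G :=
  (List.ofFn fun j => X ^ e j * B ^ (-(e j.rev))).prod * X ^ m * B ^ (2 - m)

theorem map_presentationRelator (f : G →* H) (e : Fin k → ℤ) (m : ℤ) (X B : G) :
    f (presentationRelator e m X B) = presentationRelator e m (f X) (f B) := by
  simp [presentationRelator, map_list_prod, List.map_ofFn, Function.comp_def]

theorem zpow_two_eq_of_presentationRelator_eq_one {e : Fin k → ℤ} {m : ℤ} {X B : G}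
    (σ : G →* G) (hσX : σ X = B) (hσB : σ B = X) (h : presentationRelator e m X B = 1) :
    B ^ (2 : ℤ) = X ^ (-2 : ℤ) := by
  set P := (List.ofFn fun j => X ^ e j * B ^ (-(e j.rev))).prod
  have hP : P⁻¹ = X ^ m * B ^ (2 - m) :=
    inv_eq_of_mul_eq_one_right (by rw [← h, presentationRelator, mul_assoc])
  have hσP : (List.ofFn fun j => B ^ e j * X ^ (-(e j.rev))).prod = P⁻¹ := by
    rw [← List.prod_ofFn_inv_rev]
    simp [mul_inv_rev, Fin.rev_rev, ← zpow_neg]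
  have h' := map_presentationRelator σ e m X B
  rw [h, map_one, hσX, hσB, presentationRelator, hσP, hP] at h'
  calc B ^ (2 : ℤ) = X ^ (-m) * (X ^ m * B ^ (2 - m) * B ^ m * X ^ (2 - m)) * X ^ (m - 2) := by
        group
    _ = X ^ (-2 : ℤ) := by rw [← h', mul_one, ← zpow_add]; ring_nf

theorem presentationRelator_eq_one_iff {e : Fin k → ℤ} {m : ℤ} {X B : G}
    (he : ∀ j, Even (e j)) (hm : m = 1 - ∑ j, e j) (hB : B ^ (2 : ℤ) = X ^ (-2 : ℤ)) :
    presentationRelator e m X B = 1 ↔ B = X⁻¹ := by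
  have hBeven {c : ℤ} (hc : Even c) : B ^ c = X ^ (-c) := by
    obtain ⟨d, rfl⟩ := hc
    rw [← two_mul, zpow_mul, hB, ← zpow_mul, neg_mul]
  have hsum_rev : ∑ j : Fin k, e j.rev = ∑ j, e j := Equiv.sum_comp Fin.revPerm e
  have hP : (List.ofFn fun j => X ^ e j * B ^ (-(e j.rev))).prod = X ^ (2 - 2 * m) := by
    simp_rw [hBeven (he _).neg, neg_neg, ← zpow_add]
    rw [List.prod_ofFn_zpow, Finset.sum_add_distrib, hsum_rev, hm]
    ring_nf
  have hB2m : B ^ (2 - m) = B * X ^ (m - 1) := by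
    have h1m : Even (1 - m) := by
      rw [hm, sub_sub_cancel]
      exact Finset.even_sum _ fun j _ => he j
    rw [show 2 - m = 1 + (1 - m) by ring, zpow_add, zpow_one, hBeven h1m, neg_sub]
  have hconj : presentationRelator e m X B = X ^ (2 - m) * (B * X) * (X ^ (2 - m))⁻¹ := by
    rw [presentationRelator, hP, hB2m]
    group
  rw [hconj, conj_eq_one_iff, mul_eq_one_iff_eq_inv]

theorem relators_eq_one_iff_quaternion_relations (n : ℕ) {e : Fin k → ℤ} {m : ℤ}
    (he : ∀ j, Even (e j)) (hm : m = 1 - ∑ j, e j) (X Y : G) :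
    (X ^ (n : ℤ) * Y ^ (-2 : ℤ) = 1 ∧ presentationRelator e m X (Y * X * Y⁻¹) = 1) ↔
      (Y * X * Y⁻¹ = X⁻¹ ∧ Y ^ 2 = X ^ n) := by
  have hfirst : X ^ (n : ℤ) * Y ^ (-2 : ℤ) = 1 ↔ Y ^ 2 = X ^ n := by
    rw [zpow_neg, mul_inv_eq_one, zpow_natCast, eq_comm, zpow_ofNat]
  rw [hfirst]
  constructor
  · rintro ⟨hsq, hrel⟩
    have hswap : Y * (Y * X * Y⁻¹) * Y⁻¹ = X := by
      rw [show Y * (Y * X * Y⁻¹) * Y⁻¹ = Y ^ 2 * X * (Y ^ 2)⁻¹ by rw [sq]; group, hsq,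
        ((Commute.refl X).pow_left n).eq, mul_inv_cancel_right]
    have hB :=
      zpow_two_eq_of_presentationRelator_eq_one (MulAut.conj Y).toMonoidHom rfl hswap hrel
    exact ⟨(presentationRelator_eq_one_iff he hm hB).1 hrel, hsq⟩
  · rintro ⟨hconj, hsq⟩
    rw [hconj]
    exact ⟨hsq, (presentationRelator_eq_one_iff he hm (inv_zpow' X 2)).2 rfl⟩

end Relator

section Presentation

open FreeGroup (of)

variable {k : ℕ}

def presentationRels (n : ℕ) (e : Fin k → ℤ) (m : ℤ) : Set (FreeGroup (Fin 2)) :=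
  {of 0 ^ (n : ℤ) * of 1 ^ (-2 : ℤ), presentationRelator e m (of 0) (of 1 * of 0 * (of 1)⁻¹)}

variable {n : ℕ} {e : Fin k → ℤ} {m : ℤ}

theorem forall_presentationRels_map_eq_one_iff {G : Type*} [Group G] (he : ∀ j, Even (e j))
    (hm : m = 1 - ∑ j, e j) (f : FreeGroup (Fin 2) →* G) :
    (∀ r ∈ presentationRels n e m, f r = 1) ↔
      f (of 1) * f (of 0) * (f (of 1))⁻¹ = (f (of 0))⁻¹ ∧ f (of 1) ^ 2 = f (of 0) ^ n := by
  rw [← relators_eq_one_iff_quaternion_relations n he hm]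
  simp only [presentationRels, Set.forall_mem_insert, Set.mem_singleton_iff, forall_eq, map_mul,
    map_zpow, map_inv, map_presentationRelator]

theorem presentedGroup_quaternion_relations (he : ∀ j, Even (e j)) (hm : m = 1 - ∑ j, e j) :
    let X : PresentedGroup (presentationRels n e m) := .of 0
    let Y : PresentedGroup (presentationRels n e m) := .of 1
    Y * X * Y⁻¹ = X⁻¹ ∧ Y ^ 2 = X ^ n :=
  (forall_presentationRels_map_eq_one_iff he hm (PresentedGroup.mk _)).1 fun _ =>
    PresentedGroup.one_of_mem

theorem quaternionGroup_map_presentationRels_eq_one (he : ∀ j, Even (e j))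
    (hm : m = 1 - ∑ j, e j) : ∀ r ∈ presentationRels n e m,
      FreeGroup.lift ![(QuaternionGroup.a 1 : QuaternionGroup n), .xa 0] r = 1 :=
  (forall_presentationRels_map_eq_one_iff he hm _).2
    ⟨by simpa using QuaternionGroup.xa_mul_a_mul_xa_inv (0 : ZMod (2 * n)) 1,
      by simp [QuaternionGroup.xa_sq, QuaternionGroup.a_one_pow]⟩

def presentedGroupEquivQuaternionGroup (he : ∀ j, Even (e j)) (hm : m = 1 - ∑ j, e j) :
    PresentedGroup (presentationRels n e m) ≃* QuaternionGroup n :=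
  have hrel := presentedGroup_quaternion_relations he hm
  MonoidHom.toMulEquiv
    (PresentedGroup.toGroup (quaternionGroup_map_presentationRels_eq_one he hm))
    (QuaternionGroup.lift hrel.1 hrel.2)
    (PresentedGroup.ext fun i => by
      fin_cases i
      · simpa using QuaternionGroup.lift_a_intCast hrel.1 hrel.2 1
      · simp)
    (by ext (i | i) <;> simp [QuaternionGroup.a_one_zpow])

end Presentation

theorem stmt_8_general (n : ℕ) (k : ℕ) (ns : Fin k → ℤ)
    (heven : ∀ i, Even (ns i))
    (x y b : FreeGroup (Fin 2)) (hx : x = FreeGroup.of 0) (hy : y = FreeGroup.of 1)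
    (hb : b = y * x * y⁻¹)
    (n0 : ℤ) (hn0 : n0 = 1 - ∑ i, ns i)
    (rels : Set (FreeGroup (Fin 2)))
    (hrels : rels = {x ^ (n : ℤ) * y ^ (-2 : ℤ),
      (List.ofFn fun j : Fin k => x ^ ns j * b ^ (-(ns j.rev))).prod
        * x ^ n0 * b ^ (2 - n0)}) :
    Nonempty (PresentedGroup rels ≃* QuaternionGroup n) := by
  subst hx hy hb hrels
  exact ⟨presentedGroupEquivQuaternionGroup heven hn0⟩

/-- For `n ≥ 2`, `k ≥ 0` and even integers `n_1, …, n_k` with `1 ≤ n_i ≤ 2n − 2`, setting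
`n_0 = 1 − Σ n_i`, the group presented by
`⟨x, y ∣ x^n y^{-2}, x^{n_1}(yxy^{-1})^{-n_k} ⋯ x^{n_k}(yxy^{-1})^{-n_1} x^{n_0}(yxy^{-1})^{2-n_0}⟩`
is isomorphic to the quaternion group `Q_{4n}` of order `4n`. -/
theorem stmt_8 (n : ℕ) (hn : 2 ≤ n) (k : ℕ) (ns : Fin k → ℤ)
    (heven : ∀ i, Even (ns i)) (hlb : ∀ i, 1 ≤ ns i) (hub : ∀ i, ns i ≤ 2 * (n : ℤ) - 2)
    (x y b : FreeGroup (Fin 2)) (hx : x = FreeGroup.of 0) (hy : y = FreeGroup.of 1)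
    (hb : b = y * x * y⁻¹)
    (n0 : ℤ) (hn0 : n0 = 1 - ∑ i, ns i)
    (rels : Set (FreeGroup (Fin 2)))
    (hrels : rels = {x ^ (n : ℤ) * y ^ (-2 : ℤ),
      (List.ofFn fun j : Fin k => x ^ ns j * b ^ (-(ns j.rev))).prod
        * x ^ n0 * b ^ (2 - n0)}) :
    Nonempty (PresentedGroup rels ≃* QuaternionGroup n) :=
  stmt_8_general n k ns heven x y b hx hy hb n0 hn0 rels hrels
end

section
/- Let n ≥ 2 with 3 | n and let r ≡ 2 (mod 3). Then the element 1 + x − x^r is not a unit in the group algebra 𝔽₂[C_n] of the cyclic group C_n = ⟨x⟩; consequently there exist no δ, γ ∈ ℤ[C_n] with δ(1 + x − x^r) + γ(1 + x^{-1} − x^{-r}) = 1. -/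
/-!
Reduce along `ℤ[C_n] → 𝔽₂[C_3]`, `x ↦ y`, which exists because `3 ∣ n`. Since `r ≡ 2 (mod 3)`
and `-1 = 1` in `𝔽₂`, both `1 + x - x^r` and `1 + x⁻¹ - x^(-r)` map to `1 + y + y²`, which is a
zero divisor, `(y - 1)(1 + y + y²) = y³ - 1 = 0`, and hence not a unit. A unit, or a Bézout
relation between the two elements, would survive the reduction.
-/

open MonoidAlgebra Multiplicative

section CubeRootOfUnity

variable {R : Type*} [CommRing R] {y : R}

theorem not_isUnit_one_add_add_sq (hy3 : y ^ 3 = 1) (hy : y ≠ 1) : ¬ IsUnit (1 + y + y ^ 2) := by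
  intro hu
  have hzero : (y - 1) * (1 + y + y ^ 2) = 0 := by linear_combination hy3
  exact hy (sub_eq_zero.mp (hu.mul_left_eq_zero.mp hzero))

variable [CharP R 2]

theorem not_isUnit_one_add_sub_sq (hy3 : y ^ 3 = 1) (hy : y ≠ 1) : ¬ IsUnit (1 + y - y ^ 2) := by
  rw [CharTwo.sub_eq_add]
  exact not_isUnit_one_add_add_sq hy3 hy

theorem not_isCoprime_one_add_sub_sq (hy3 : y ^ 3 = 1) (hy : y ≠ 1) :
    ¬ IsCoprime (1 + y - y ^ 2) (1 + y ^ 2 - y) := by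
  rw [show 1 + y ^ 2 - y = 1 + y - y ^ 2 by simp only [CharTwo.sub_eq_add]; ring, isCoprime_self]
  exact not_isUnit_one_add_sub_sq hy3 hy

end CubeRootOfUnity

section CyclicGroupAlgebra

variable {m n : ℕ}

theorem ofAdd_one_pow_self : ofAdd (1 : ZMod m) ^ m = 1 := by
  rw [← ofAdd_nsmul, nsmul_one, ZMod.natCast_self, ofAdd_zero]

theorem ofAdd_one_zpow_of_emod_eq {j : ℤ} {b : ℕ} (hj : j % m = b) :
    ofAdd (1 : ZMod m) ^ j = ofAdd 1 ^ b := by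
  rw [zpow_eq_zpow_emod' j ofAdd_one_pow_self, hj, zpow_natCast]

variable (A : Type*) [Ring A]

theorem of_ofAdd_one_pow_self : of A _ (ofAdd (1 : ZMod m)) ^ m = 1 := by
  rw [← map_pow, ofAdd_one_pow_self, map_one]

theorem of_ofAdd_one_ne_one [Nontrivial A] (hm : m ≠ 1) : of A _ (ofAdd (1 : ZMod m)) ≠ 1 := by
  have := ZMod.nontrivial_iff.mpr hm
  rw [← map_one (of A _), (of_injective (R := A)).ne_iff]
  exact fun h ↦ one_ne_zero (ofAdd.injective (h.trans ofAdd_zero.symm))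

/-- The reduction `k[C_n] → A[C_m]` along `C_n → C_m`, `x ↦ x`, and the structure map `k → A`. -/
noncomputable def reduceCyclic (k : Type*) [CommRing k] [Algebra k A] (h : m ∣ n) :
    MonoidAlgebra k (Multiplicative (ZMod n)) →ₐ[k] MonoidAlgebra A (Multiplicative (ZMod m)) :=
  lift k _ _ ((of A _).comp (ZMod.castHom h (ZMod m)).toAddMonoidHom.toMultiplicative)

theorem reduceCyclic_of_eq_zpow {k : Type*} [CommRing k] [Algebra k A] (h : m ∣ n)
    {g : Multiplicative (ZMod n)} {j : ℤ} {b : ℕ} (hg : g = ofAdd 1 ^ j) (hj : j % m = b) :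
    reduceCyclic A k h (of k _ g) = of A _ (ofAdd (1 : ZMod m)) ^ b := by
  have hgen : (ZMod.castHom h (ZMod m)).toAddMonoidHom.toMultiplicative (ofAdd 1) = ofAdd 1 :=
    congrArg ofAdd (map_one (ZMod.castHom h (ZMod m)))
  rw [reduceCyclic, lift_of, MonoidHom.comp_apply, hg, map_zpow, hgen,
    ofAdd_one_zpow_of_emod_eq hj, map_pow]

end CyclicGroupAlgebra

theorem stmt_9_general (n : ℕ) (h3 : 3 ∣ n) (r : ℤ) (hr : r % 3 = 2)
    (g : Multiplicative (ZMod n)) (hg : g = Multiplicative.ofAdd (1 : ZMod n)) :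
    (¬ IsUnit ((1 : MonoidAlgebra (ZMod 2) (Multiplicative (ZMod n)))
        + MonoidAlgebra.of (ZMod 2) _ g - MonoidAlgebra.of (ZMod 2) _ (g ^ r))) ∧
    (¬ ∃ δ γ : MonoidAlgebra ℤ (Multiplicative (ZMod n)),
        δ * (1 + MonoidAlgebra.of ℤ _ g - MonoidAlgebra.of ℤ _ (g ^ r))
          + γ * (1 + MonoidAlgebra.of ℤ _ g⁻¹ - MonoidAlgebra.of ℤ _ (g ^ (-r))) = 1) := by
  have : CharP (MonoidAlgebra (ZMod 2) (Multiplicative (ZMod 3))) 2 :=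
    charP_of_injective_algebraMap' (ZMod 2) 2
  set y := of (ZMod 2) _ (ofAdd (1 : ZMod 3))
  have hy3 : y ^ 3 = 1 := of_ofAdd_one_pow_self _
  have hy : y ≠ 1 := of_ofAdd_one_ne_one _ (by norm_num)
  subst hg
  constructor
  · intro hu
    have hred := hu.map (reduceCyclic (ZMod 2) (ZMod 2) h3)
    simp only [map_sub, map_add, map_one] at hred
    rw [reduceCyclic_of_eq_zpow _ h3 (zpow_one _).symm (b := 1) rfl,
      reduceCyclic_of_eq_zpow _ h3 rfl hr, pow_one] at hred
    exact not_isUnit_one_add_sub_sq hy3 hy hred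
  · intro hcop
    have hred := IsCoprime.map hcop (reduceCyclic (ZMod 2) ℤ h3).toRingHom
    simp only [AlgHom.toRingHom_eq_coe, RingHom.coe_coe, map_sub, map_add, map_one] at hred
    rw [reduceCyclic_of_eq_zpow _ h3 (zpow_one _).symm (b := 1) rfl,
      reduceCyclic_of_eq_zpow _ h3 rfl hr,
      reduceCyclic_of_eq_zpow _ h3 (zpow_neg_one _).symm (b := 2) rfl,
      reduceCyclic_of_eq_zpow _ h3 rfl (b := 1) (by omega), pow_one] at hred
    exact not_isCoprime_one_add_sub_sq hy3 hy hred

/-- Let `n ≥ 2` with `3 ∣ n` and `r ≡ 2 (mod 3)`. Writing `x` for a generator of the cyclic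
group `C_n`, the element `1 + x − x^r` is not a unit in `𝔽₂[C_n]`; consequently there are no
`δ, γ ∈ ℤ[C_n]` with `δ(1 + x − x^r) + γ(1 + x^{-1} − x^{-r}) = 1`. -/
theorem stmt_9 (n : ℕ) (hn : 2 ≤ n) (h3 : 3 ∣ n) (r : ℤ) (hr : r % 3 = 2)
    (g : Multiplicative (ZMod n)) (hg : g = Multiplicative.ofAdd (1 : ZMod n)) :
    (¬ IsUnit ((1 : MonoidAlgebra (ZMod 2) (Multiplicative (ZMod n)))
        + MonoidAlgebra.of (ZMod 2) _ g - MonoidAlgebra.of (ZMod 2) _ (g ^ r))) ∧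
    (¬ ∃ δ γ : MonoidAlgebra ℤ (Multiplicative (ZMod n)),
        δ * (1 + MonoidAlgebra.of ℤ _ g - MonoidAlgebra.of ℤ _ (g ^ r))
          + γ * (1 + MonoidAlgebra.of ℤ _ g⁻¹ - MonoidAlgebra.of ℤ _ (g ^ (-r))) = 1) :=
  stmt_9_general n h3 r hr g hg
end

section
/- Let n ≥ 2 and r ≥ 2 with r = 3t+1, G = Q_{4n} = ⟨x,y | x^n = y², yxy^{-1} = x^{-1}⟩. With Σ = Σ_{i=0}^{t-1} x^{3i}, α = −x²(x−1)Σ(x^r + x^{r-1} − 1) and β = 1 + x(x²−1)Σ + x^{r+3}(x−1)Σ y, we have α·(xy − 1) + β·(1 + x − x^r) = 1 in ℤG. -/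
set_option maxHeartbeats 1000000 in
/-- Let `n ≥ 2`, `r = 3t + 1 ≥ 2`, and work in `ℤQ_{4n}` with `x = a 1`, `y = xa 0`.
With `Σ = Σ_{i=0}^{t-1} x^{3i}`, `α = −x²(x−1)Σ(x^r + x^{r-1} − 1)` and
`β = 1 + x(x²−1)Σ + x^{r+3}(x−1)Σ y`, one has `α(xy − 1) + β(1 + x − x^r) = 1`. -/
theorem stmt_15 (n : ℕ) (hn : 2 ≤ n) (r t : ℕ) (hr : 2 ≤ r) (hrt : r = 3 * t + 1)
    (X Y : MonoidAlgebra ℤ (QuaternionGroup n))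
    (hX : X = MonoidAlgebra.of ℤ (QuaternionGroup n) (QuaternionGroup.a 1))
    (hY : Y = MonoidAlgebra.of ℤ (QuaternionGroup n) (QuaternionGroup.xa 0))
    (S α β : MonoidAlgebra ℤ (QuaternionGroup n))
    (hS : S = ∑ i ∈ Finset.range t, X ^ (3 * i))
    (hα : α = -(X ^ 2 * (X - 1) * S * (X ^ r + X ^ (r - 1) - 1)))
    (hβ : β = 1 + X * (X ^ 2 - 1) * S + X ^ (r + 3) * (X - 1) * S * Y) :
    α * (X * Y - 1) + β * (1 + X - X ^ r) = 1 := by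
  subst hrt
  rw [show 3 * t + 1 - 1 = 3 * t from by omega] at hα
  -- group-theoretic commutation
  have hXYX : X * Y * X = Y := by
    rw [hX, hY, ← map_mul, ← map_mul, QuaternionGroup.a_mul_xa,
      QuaternionGroup.xa_mul_a]
    norm_num
  have hpow : ∀ m : ℕ, X ^ m * Y * X ^ m = Y := by
    intro m
    induction m with
    | zero => simp
    | succ k ih =>
      have h1 : X ^ (k + 1) * Y * X ^ (k + 1) = X * (X ^ k * Y * X ^ k) * X := by
        nth_rewrite 2 [pow_succ]
        rw [pow_succ']
        noncomm_ring
      rw [h1, ih, hXYX]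
  have h2 : ∀ k m : ℕ, X ^ (k + m) * Y * X ^ m = X ^ k * Y := by
    intro k m
    have h1 : X ^ (k + m) * Y * X ^ m = X ^ k * (X ^ m * Y * X ^ m) := by
      rw [pow_add]; noncomm_ring
    rw [h1, hpow]
  -- polynomial machinery
  set F : Polynomial ℤ →ₐ[ℤ] MonoidAlgebra ℤ (QuaternionGroup n) := Polynomial.aeval X with hF
  set T : Polynomial ℤ := Polynomial.X with hT
  set s : Polynomial ℤ := ∑ i ∈ Finset.range t, T ^ (3 * i) with hs_def
  have hFX : F T = X := Polynomial.aeval_X X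
  have hFs : F s = S := by
    rw [hS, hs_def, map_sum]
    simp [map_pow, hFX]
  set p1 : Polynomial ℤ := T ^ 2 * (T - 1) * s * (T ^ (3 * t + 1) + T ^ (3 * t) - 1) with hp1
  set p2 : Polynomial ℤ := 1 + T * (T ^ 2 - 1) * s with hp2
  set p3 : Polynomial ℤ := T ^ (3 * t + 1 + 3) * (T - 1) * s with hp3
  set q : Polynomial ℤ := 1 + T - T ^ (3 * t + 1) with hq
  have hα' : α = -(F p1) := by
    rw [hα, hp1]
    simp only [map_mul, map_sub, map_add, map_pow, map_one, hFX, hFs]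
  have hβ' : β = F p2 + F p3 * Y := by
    rw [hβ, hp2, hp3]
    simp only [map_mul, map_sub, map_add, map_pow, map_one, hFX, hFs]
  have hQ : (1 + X - X ^ (3 * t + 1)) = F q := by
    rw [hq]; simp only [map_sub, map_add, map_pow, map_one, hFX]
  -- key geometric sum relation
  have hgs : (T ^ 3 - 1) * s = T ^ (3 * t) - 1 := by
    have : s = ∑ i ∈ Finset.range t, (T ^ 3) ^ i := by
      rw [hs_def]
      exact Finset.sum_congr rfl fun i _ => by rw [← pow_mul]
    rw [this, mul_comm, geom_sum_mul, ← pow_mul]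
  -- key step: move Y past F q
  have hw1 : X ^ (3 * t + 1 + 3) * Y * X = X ^ (3 * t + 3) * Y := by
    have := h2 (3 * t + 3) 1
    rw [pow_one] at this
    rw [show 3 * t + 1 + 3 = 3 * t + 3 + 1 from by omega, this]
  have hw2 : X ^ (3 * t + 1 + 3) * Y * X ^ (3 * t + 1) = X ^ 3 * Y := by
    have := h2 3 (3 * t + 1)
    rw [show 3 + (3 * t + 1) = 3 * t + 1 + 3 from by omega] at this
    rw [this]
  have k1 : F p3 * Y * F q = F (p1 * T) * Y := by
    have e1 : F p3 = F ((T - 1) * s) * X ^ (3 * t + 1 + 3) := by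
      rw [show p3 = (T - 1) * s * T ^ (3 * t + 1 + 3) from by rw [hp3]; ring,
        map_mul, map_pow, hFX]
    have e2 : X ^ (3 * t + 1 + 3) * Y * F q
        = (X ^ (3 * t + 1 + 3) + X ^ (3 * t + 3) - X ^ 3) * Y := by
      rw [← hQ]
      calc X ^ (3 * t + 1 + 3) * Y * (1 + X - X ^ (3 * t + 1))
          = X ^ (3 * t + 1 + 3) * Y + X ^ (3 * t + 1 + 3) * Y * X
            - X ^ (3 * t + 1 + 3) * Y * X ^ (3 * t + 1) := by noncomm_ring
        _ = X ^ (3 * t + 1 + 3) * Y + X ^ (3 * t + 3) * Y - X ^ 3 * Y := by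
            rw [hw1, hw2]
        _ = (X ^ (3 * t + 1 + 3) + X ^ (3 * t + 3) - X ^ 3) * Y := by noncomm_ring
    calc F p3 * Y * F q
        = F ((T - 1) * s) * (X ^ (3 * t + 1 + 3) * Y * F q) := by
          rw [e1]; simp only [mul_assoc]
      _ = F ((T - 1) * s) * ((X ^ (3 * t + 1 + 3) + X ^ (3 * t + 3) - X ^ 3) * Y) := by
          rw [e2]
      _ = F ((T - 1) * s * (T ^ (3 * t + 1 + 3) + T ^ (3 * t + 3) - T ^ 3)) * Y := by
          have e3 : F (T ^ (3 * t + 1 + 3) + T ^ (3 * t + 3) - T ^ 3)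
              = X ^ (3 * t + 1 + 3) + X ^ (3 * t + 3) - X ^ 3 := by
            rw [map_sub, map_add, map_pow, map_pow, map_pow, hFX]
          rw [← e3, ← mul_assoc, ← map_mul]
      _ = F (p1 * T) * Y := by
          rw [show (T - 1) * s * (T ^ (3 * t + 1 + 3) + T ^ (3 * t + 3) - T ^ 3)
            = p1 * T from by rw [hp1]; ring]
  have k3 : p1 + p2 * q = 1 := by
    rw [hp1, hp2, hq]
    linear_combination T * hgs
  have k1' : F p3 * Y * F q = F p1 * (X * Y) := by
    rw [k1, map_mul, hFX, mul_assoc]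
  have m1 : F p1 + F p2 * F q = 1 := by
    rw [← map_mul, ← map_add, k3, map_one]
  clear_value p1 p2 p3 q s
  calc α * (X * Y - 1) + β * (1 + X - X ^ (3 * t + 1))
      = -(F p1) * (X * Y - 1) + (F p2 + F p3 * Y) * F q := by rw [hα', hβ', hQ]
    _ = (F p3 * Y * F q - F p1 * (X * Y)) + (F p1 + F p2 * F q) := by noncomm_ring
    _ = 1 := by rw [k1', sub_self, zero_add, m1]
end

section
/- In the quotient ring ℤ[ζ₁₂, j] of ℤQ₂₄ (where ζ₁₂ is a primitive 12th root of unity, j² = −1 and jζ₁₂j^{-1} = ζ₁₂^{-1}), the ideal generated by the two elements 1 + ζ₁₂ − j and 1 + ζ₁₂ is the whole ring. -/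
/-! The difference of the two generators is `j`, which is a unit: `j² = ζ₁₂⁶ = −1` because
`ζ₁₂⁶ + 1 = (ζ₁₂² + 1) Φ₁₂(ζ₁₂)`. -/

noncomputable section

/-- The element `x` of `ℤQ₂₄` (with `Q₂₄ = QuaternionGroup 6`). -/
def q24x : MonoidAlgebra ℤ (QuaternionGroup 6) :=
  MonoidAlgebra.of ℤ (QuaternionGroup 6) (QuaternionGroup.a 1)

/-- The element `y` of `ℤQ₂₄`. -/
def q24y : MonoidAlgebra ℤ (QuaternionGroup 6) :=
  MonoidAlgebra.of ℤ (QuaternionGroup 6) (QuaternionGroup.xa 0)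

/-- The relation identifying `Φ₁₂(x) = x⁴ − x² + 1` with `0`. -/
def q24rel : MonoidAlgebra ℤ (QuaternionGroup 6) → MonoidAlgebra ℤ (QuaternionGroup 6) → Prop :=
  fun u v => u = q24x ^ 4 - q24x ^ 2 + 1 ∧ v = 0

/-- The ring `ℤ[ζ₁₂, j] = ℤQ₂₄/(Φ₁₂(x))`, with `ζ₁₂` the image of `x` and `j` the image
of `y`. -/
def Z12j : Type := RingQuot q24rel

instance : Ring Z12j := inferInstanceAs (Ring (RingQuot q24rel))

/-- `ζ₁₂ ∈ ℤ[ζ₁₂, j]`, the image of `x`. -/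
def zeta12 : Z12j := RingQuot.mkRingHom q24rel q24x

/-- `j ∈ ℤ[ζ₁₂, j]`, the image of `y`. -/
def jay : Z12j := RingQuot.mkRingHom q24rel q24y

lemma q24y_mul_self : q24y * q24y = q24x ^ 6 := by
  rw [q24x, q24y, ← map_mul, ← map_pow]
  rfl

lemma zeta12_cyclotomic : zeta12 ^ 4 - zeta12 ^ 2 + 1 = 0 := by
  have h := RingQuot.mkRingHom_rel (r := q24rel) ⟨rfl, rfl⟩
  rw [map_add, map_sub, map_pow, map_pow, map_one, map_zero] at h
  exact h

lemma zeta12_pow_six : zeta12 ^ 6 = -1 := by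
  have h : zeta12 ^ 6 + 1 = (zeta12 ^ 2 + 1) * (zeta12 ^ 4 - zeta12 ^ 2 + 1) := by
    noncomm_ring
  rw [zeta12_cyclotomic, mul_zero] at h
  exact eq_neg_of_add_eq_zero_left h

lemma jay_mul_self : jay * jay = -1 := by
  have h : RingQuot.mkRingHom q24rel (q24y * q24y) = RingQuot.mkRingHom q24rel (q24x ^ 6) :=
    congrArg _ q24y_mul_self
  rw [map_mul, map_pow] at h
  exact h.trans zeta12_pow_six

lemma isUnit_jay : IsUnit jay :=
  ⟨⟨jay, -jay, by rw [mul_neg, jay_mul_self, neg_neg], by rw [neg_mul, jay_mul_self, neg_neg]⟩,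
    rfl⟩

/-- In `ℤ[ζ₁₂, j]`, the (left) ideal generated by `1 + ζ₁₂ − j` and `1 + ζ₁₂` is the
whole ring. -/
theorem stmt_16 :
    Ideal.span ({1 + zeta12 - jay, 1 + zeta12} : Set Z12j) = ⊤ := by
  refine Ideal.eq_top_of_isUnit_mem _ ?_ isUnit_jay
  have hjay : jay = (1 + zeta12) - (1 + zeta12 - jay) := by abel
  rw [hjay]
  exact Ideal.sub_mem _ (Ideal.subset_span (by simp)) (Ideal.subset_span (by simp))

end
end

section
/- Let S = {(a 0; 0 b), (0 a; b 0) : a, b ∈ 𝔽₉^×} ≤ GL₂(𝔽₉). Then |S| = 128, the double coset space S \ GL₂(𝔽₉) / S has exactly 6 elements, with representatives the identity and the matrices (1 a; 1 1) for a ∈ {0, −1, z, 1+z, 1−z}, where z ∈ 𝔽₉ satisfies z² = 2. Moreover, for M = (a b; c d) ∈ GL₂(𝔽₉) with a, d ≠ 0, either SMS = S or SMS equals the double coset of (1 (bc)/(ad); 1 1). -/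
/-!
Scaling rows and columns by the diagonal part of `S` turns `(a b; c d)` with `a, c, d ≠ 0` into
`(1 t; 1 1)` with `t = bc/(ad)`, and the antidiagonal part swaps rows, so every invertible matrix
lies in `S` or in `S (1 t; 1 1) S` for some `t ≠ 1`. Comparing entries of
`s₁ (1 t; 1 1) s₂ = (1 t'; 1 1)` shows that `t` is determined up to `t ↦ t⁻¹`. In `𝔽₉` the
factorisation `X⁹ - X = ∏ (X - c - dz)` over `c, d ∈ {0, ±1}` lists all elements, and the eight
values `t ≠ 1` form the five classes `{0}, {-1}, {z, -z}, {1 + z, -1 + z}, {1 - z, -1 - z}`.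
-/

/-- The double coset of a matrix `M` by the set `S` of invertible monomial matrices. -/
def doubleCoset {F : Type*} [Field F] (S : Set (Matrix (Fin 2) (Fin 2) F))
    (M : Matrix (Fin 2) (Fin 2) F) : Set (Matrix (Fin 2) (Fin 2) F) :=
  {N | ∃ s₁ ∈ S, ∃ s₂ ∈ S, N = s₁ * M * s₂}

def monomialMatrices (F : Type*) [Field F] : Set (Matrix (Fin 2) (Fin 2) F) :=
  {M | ∃ a b : F, a ≠ 0 ∧ b ≠ 0 ∧ (M = !![a, 0; 0, b] ∨ M = !![0, a; b, 0])}

namespace monomialMatrices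

variable {F : Type*} [Field F]

theorem diagonal_mem {a b : F} (ha : a ≠ 0) (hb : b ≠ 0) :
    !![a, 0; 0, b] ∈ monomialMatrices F :=
  ⟨a, b, ha, hb, .inl rfl⟩

theorem antidiagonal_mem {a b : F} (ha : a ≠ 0) (hb : b ≠ 0) :
    !![0, a; b, 0] ∈ monomialMatrices F :=
  ⟨a, b, ha, hb, .inr rfl⟩

theorem one_mem : (1 : Matrix (Fin 2) (Fin 2) F) ∈ monomialMatrices F := by
  simpa [Matrix.one_fin_two] using diagonal_mem (one_ne_zero (α := F)) one_ne_zero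

theorem mul_mem {s t : Matrix (Fin 2) (Fin 2) F} (hs : s ∈ monomialMatrices F)
    (ht : t ∈ monomialMatrices F) : s * t ∈ monomialMatrices F := by
  obtain ⟨a, b, ha, hb, rfl | rfl⟩ := hs <;> obtain ⟨c, d, hc, hd, rfl | rfl⟩ := ht
  · simpa [Matrix.mul_fin_two] using diagonal_mem (mul_ne_zero ha hc) (mul_ne_zero hb hd)
  · simpa [Matrix.mul_fin_two] using antidiagonal_mem (mul_ne_zero ha hc) (mul_ne_zero hb hd)
  · simpa [Matrix.mul_fin_two] using antidiagonal_mem (mul_ne_zero ha hd) (mul_ne_zero hb hc)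
  · simpa [Matrix.mul_fin_two] using diagonal_mem (mul_ne_zero ha hd) (mul_ne_zero hb hc)

theorem isUnit_det {s : Matrix (Fin 2) (Fin 2) F} (hs : s ∈ monomialMatrices F) :
    IsUnit s.det := by
  obtain ⟨a, b, ha, hb, rfl | rfl⟩ := hs <;> simp [Matrix.det_fin_two, ha, hb]

theorem inv_mem {s : Matrix (Fin 2) (Fin 2) F} (hs : s ∈ monomialMatrices F) :
    s⁻¹ ∈ monomialMatrices F := by
  obtain ⟨a, b, ha, hb, rfl | rfl⟩ := hs
  · rw [Matrix.inv_eq_left_inv (B := !![a⁻¹, 0; 0, b⁻¹])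
      (by simp [Matrix.one_fin_two, ha, hb])]
    exact diagonal_mem (inv_ne_zero ha) (inv_ne_zero hb)
  · rw [Matrix.inv_eq_left_inv (B := !![0, b⁻¹; a⁻¹, 0])
      (by simp [Matrix.one_fin_two, ha, hb])]
    exact antidiagonal_mem (inv_ne_zero hb) (inv_ne_zero ha)

end monomialMatrices

section doubleCoset

open monomialMatrices

variable {F : Type*} [Field F]

theorem mem_doubleCoset_self (M : Matrix (Fin 2) (Fin 2) F) :
    M ∈ doubleCoset (monomialMatrices F) M :=
  ⟨1, one_mem, 1, one_mem, by simp⟩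

theorem doubleCoset_subset_of_mem {M N : Matrix (Fin 2) (Fin 2) F}
    (h : N ∈ doubleCoset (monomialMatrices F) M) :
    doubleCoset (monomialMatrices F) N ⊆ doubleCoset (monomialMatrices F) M := by
  obtain ⟨s₁, hs₁, s₂, hs₂, rfl⟩ := h
  rintro _ ⟨t₁, ht₁, t₂, ht₂, rfl⟩
  exact ⟨t₁ * s₁, mul_mem ht₁ hs₁, s₂ * t₂, mul_mem hs₂ ht₂, by simp only [Matrix.mul_assoc]⟩

theorem doubleCoset_eq_of_mem {M N : Matrix (Fin 2) (Fin 2) F}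
    (h : N ∈ doubleCoset (monomialMatrices F) M) :
    doubleCoset (monomialMatrices F) N = doubleCoset (monomialMatrices F) M := by
  refine (doubleCoset_subset_of_mem h).antisymm (doubleCoset_subset_of_mem ?_)
  obtain ⟨s₁, hs₁, s₂, hs₂, rfl⟩ := h
  refine ⟨s₁⁻¹, inv_mem hs₁, s₂⁻¹, inv_mem hs₂, ?_⟩
  simp only [Matrix.mul_assoc, Matrix.mul_nonsing_inv _ (isUnit_det hs₂), Matrix.mul_one,
    ← Matrix.mul_assoc s₁⁻¹, Matrix.nonsing_inv_mul _ (isUnit_det hs₁), Matrix.one_mul]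

theorem doubleCoset_one : doubleCoset (monomialMatrices F) 1 = monomialMatrices F := by
  ext X
  refine ⟨?_, fun hX => ⟨X, hX, 1, one_mem, by simp⟩⟩
  rintro ⟨s₁, hs₁, s₂, hs₂, rfl⟩
  simpa using mul_mem hs₁ hs₂

theorem doubleCoset_one_ne (t : F) :
    doubleCoset (monomialMatrices F) 1 ≠ doubleCoset (monomialMatrices F) !![1, t; 1, 1] := by
  intro h
  have := mem_doubleCoset_self (!![1, t; 1, 1] : Matrix (Fin 2) (Fin 2) F)
  rw [← h, doubleCoset_one] at this
  obtain ⟨a, b, -, -, h | h⟩ := this <;> simp at h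

theorem eq_or_mul_eq_one_of_mem_doubleCoset {t t' : F}
    (h : !![1, t'; 1, 1] ∈ doubleCoset (monomialMatrices F) !![1, t; 1, 1]) :
    t' = t ∨ t * t' = 1 := by
  obtain ⟨s₁, ⟨p, q, hp, hq, rfl | rfl⟩, s₂, ⟨r, s, hr, hs, rfl | rfl⟩, h⟩ := h <;>
    simp only [Matrix.mul_fin_two, mul_one, mul_zero, zero_mul, add_zero, zero_add,
      EmbeddingLike.apply_eq_iff_eq, Matrix.vecCons_inj, and_true] at h <;>
    obtain ⟨⟨e1, e2⟩, e3, e4⟩ := h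
  · exact Or.inl (by linear_combination e2 - t * e4 - t * p * s * (e1 - e3) - t * s * (q - p) * e1)
  · exact Or.inr (by linear_combination t * e2 - q * r * e1 + t * p * r * e3 - e4)
  · exact Or.inr (by linear_combination t * e2 - e1 + t * p * s * e3 - p * r * e4)
  · exact Or.inl (by linear_combination e2 + p * r * e3 - t * q * r * e1 - t * e4)

theorem doubleCoset_eq_doubleCoset_iff {t t' : F} :
    doubleCoset (monomialMatrices F) !![1, t'; 1, 1] =
        doubleCoset (monomialMatrices F) !![1, t; 1, 1] ↔ t' = t ∨ t * t' = 1 := by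
  refine ⟨fun h => eq_or_mul_eq_one_of_mem_doubleCoset (h ▸ mem_doubleCoset_self _), ?_⟩
  rintro (rfl | h)
  · rfl
  have ht : t ≠ 0 := left_ne_zero_of_mul_eq_one h
  refine doubleCoset_eq_of_mem ⟨!![t⁻¹, 0; 0, 1], diagonal_mem (inv_ne_zero ht) one_ne_zero,
    !![0, 1; 1, 0], antidiagonal_mem one_ne_zero one_ne_zero, ?_⟩
  simp [eq_inv_of_mul_eq_one_right h, ht]

theorem doubleCoset_swap_rows (a b c d : F) :
    doubleCoset (monomialMatrices F) !![c, d; a, b] =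
      doubleCoset (monomialMatrices F) !![a, b; c, d] :=
  doubleCoset_eq_of_mem ⟨!![0, 1; 1, 0], antidiagonal_mem one_ne_zero one_ne_zero, 1, one_mem,
    by simp⟩

theorem doubleCoset_eq_one_or_eq_of_ne_zero {a b c d : F} (ha : a ≠ 0) (hd : d ≠ 0) :
    doubleCoset (monomialMatrices F) !![a, b; c, d] = doubleCoset (monomialMatrices F) 1 ∨
      doubleCoset (monomialMatrices F) !![a, b; c, d] =
        doubleCoset (monomialMatrices F) !![1, b * c / (a * d); 1, 1] := by
  by_cases hc : c = 0
  · subst hc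
    by_cases hb : b = 0
    · subst hb
      exact .inl (doubleCoset_eq_of_mem ⟨_, diagonal_mem ha hd, 1, one_mem, by simp⟩)
    · refine .inr (doubleCoset_eq_of_mem ⟨!![0, 1; d / b, 0],
        antidiagonal_mem one_ne_zero (div_ne_zero hd hb), !![0, b; a, 0],
        antidiagonal_mem hb ha, ?_⟩)
      simp
      field_simp
  · refine .inr (doubleCoset_eq_of_mem ⟨!![a, 0; 0, c], diagonal_mem ha hc,
      !![1, 0; 0, d / c], diagonal_mem one_ne_zero (div_ne_zero hd hc), ?_⟩)
    simp
    constructor <;> field_simp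

theorem doubleCoset_eq_one_or_exists {M : Matrix (Fin 2) (Fin 2) F} (hM : M.det ≠ 0) :
    doubleCoset (monomialMatrices F) M = doubleCoset (monomialMatrices F) 1 ∨
      ∃ t ≠ 1, doubleCoset (monomialMatrices F) M =
        doubleCoset (monomialMatrices F) !![1, t; 1, 1] := by
  have of_ne_zero {a b c d : F} (ha : a ≠ 0) (hd : d ≠ 0) (hdet : b * c ≠ a * d) :
      doubleCoset (monomialMatrices F) !![a, b; c, d] = doubleCoset (monomialMatrices F) 1 ∨
        ∃ t ≠ 1, doubleCoset (monomialMatrices F) !![a, b; c, d] =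
          doubleCoset (monomialMatrices F) !![1, t; 1, 1] :=
    (doubleCoset_eq_one_or_eq_of_ne_zero ha hd).imp_right fun h =>
      ⟨_, div_ne_one_of_ne hdet, h⟩
  rw [Matrix.eta_fin_two M, Matrix.det_fin_two_of] at *
  by_cases hdiag : M 0 0 * M 1 1 = 0
  · rw [← doubleCoset_swap_rows]
    have hanti : M 0 1 * M 1 0 ≠ 0 := by rintro h; exact hM (by rw [hdiag, h, sub_zero])
    exact of_ne_zero (right_ne_zero_of_mul hanti) (left_ne_zero_of_mul hanti)
      (by rw [mul_comm, hdiag, mul_comm]; exact hanti.symm)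
  · exact of_ne_zero (left_ne_zero_of_mul hdiag) (right_ne_zero_of_mul hdiag)
      (fun h => hM (by rw [h, sub_self]))

end doubleCoset

open monomialMatrices in
theorem card_monomialMatrices (F : Type*) [Field F] [Fintype F] :
    Nat.card (monomialMatrices F) = 2 * (Fintype.card F - 1) ^ 2 := by
  let diag : Fˣ × Fˣ → Matrix (Fin 2) (Fin 2) F := fun p => !![(p.1 : F), 0; 0, (p.2 : F)]
  let anti : Fˣ × Fˣ → Matrix (Fin 2) (Fin 2) F := fun p => !![0, (p.1 : F); (p.2 : F), 0]
  have hinj : Function.Injective (Sum.elim diag anti) := by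
    refine Function.Injective.sumElim ?_ ?_ ?_ <;> intro p q h
    · simp only [diag, EmbeddingLike.apply_eq_iff_eq, Matrix.vecCons_inj, and_true,
        true_and] at h
      exact Prod.ext (Units.ext h.1) (Units.ext h.2)
    · simp only [anti, EmbeddingLike.apply_eq_iff_eq, Matrix.vecCons_inj, and_true,
        true_and] at h
      exact Prod.ext (Units.ext h.1) (Units.ext h.2)
    · simp [diag, anti] at h
  have hrange : Set.range (Sum.elim diag anti) = monomialMatrices F := by
    ext M
    constructor
    · rintro ⟨p | p, rfl⟩
      exacts [diagonal_mem p.1.ne_zero p.2.ne_zero, antidiagonal_mem p.1.ne_zero p.2.ne_zero]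
    · rintro ⟨a, b, ha, hb, rfl | rfl⟩
      exacts [⟨.inl (Units.mk0 a ha, Units.mk0 b hb), rfl⟩,
        ⟨.inr (Units.mk0 a ha, Units.mk0 b hb), rfl⟩]
  rw [← hrange, Nat.card_range_of_injective hinj, Nat.card_sum, Nat.card_prod, Nat.card_units,
    Nat.card_eq_fintype_card]
  ring

theorem pow_nine_sub_self_eq_prod {R : Type*} [CommRing R] {z : R} (h3 : (3 : R) = 0)
    (hz : z ^ 2 = 2) (t : R) :
    t ^ 9 - t = (t * (t - 1) * (t + 1)) * ((t - z) * (t - z - 1) * (t - z + 1)) *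
      ((t + z) * (t + z - 1) * (t + z + 1)) := by
  have hminus : (t - z) * (t - z - 1) * (t - z + 1) = t ^ 3 - t - z := by
    linear_combination (t * z ^ 2 - t ^ 2 * z) * h3 - z * hz
  have hplus : (t + z) * (t + z - 1) * (t + z + 1) = t ^ 3 - t + z := by
    linear_combination (t * z ^ 2 + t ^ 2 * z) * h3 + z * hz
  rw [hminus, hplus]
  linear_combination (t ^ 7 - t ^ 5 + t ^ 3 - t) * h3 + (t ^ 3 - t) * hz

def doubleCosetSpace (F : Type*) [Field F] : Set (Set (Matrix (Fin 2) (Fin 2) F)) :=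
  {C | ∃ M : Matrix (Fin 2) (Fin 2) F, M.det ≠ 0 ∧ C = doubleCoset (monomialMatrices F) M}

section FieldOfNineElements

variable {F : Type*} [Field F] [Fintype F]

theorem three_eq_zero_of_card_eq_nine (hF : Fintype.card F = 9) : (3 : F) = 0 := by
  have h9 : (3 : F) * 3 = 0 := by
    have := Nat.cast_card_eq_zero F
    rw [hF] at this
    linear_combination this
  exact mul_self_eq_zero.mp h9

theorem eq_of_card_eq_nine (hF : Fintype.card F = 9) {z : F} (hz : z ^ 2 = 2) (t : F) :
    t = 0 ∨ t = 1 ∨ t = -1 ∨ t = z ∨ t = 1 + z ∨ t = -1 + z ∨ t = -z ∨ t = 1 - z ∨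
      t = -1 - z := by
  have h := pow_nine_sub_self_eq_prod (three_eq_zero_of_card_eq_nine hF) hz t
  rw [← hF, FiniteField.pow_card, sub_self, eq_comm] at h
  simpa only [mul_eq_zero, sub_eq_zero, add_eq_zero_iff_eq_neg, sub_eq_iff_eq_add,
    ← eq_sub_iff_add_eq, zero_add, zero_sub, or_assoc] using h

theorem doubleCosetSpace_eq_of_card_eq_nine (hF : Fintype.card F = 9) {z : F} (hz : z ^ 2 = 2) :
    doubleCosetSpace F =
      {doubleCoset (monomialMatrices F) 1, doubleCoset (monomialMatrices F) !![1, 0; 1, 1],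
        doubleCoset (monomialMatrices F) !![1, -1; 1, 1],
        doubleCoset (monomialMatrices F) !![1, z; 1, 1],
        doubleCoset (monomialMatrices F) !![1, 1 + z; 1, 1],
        doubleCoset (monomialMatrices F) !![1, 1 - z; 1, 1]} := by
  have h3 := three_eq_zero_of_card_eq_nine hF
  -- `grind` needs the nontriviality of `F` as a hypothesis.
  have hone : (1 : F) ≠ 0 := one_ne_zero
  ext C
  simp only [doubleCosetSpace, Set.mem_ofPred_eq, Set.mem_insert_iff, Set.mem_singleton_iff]
  constructor
  · rintro ⟨M, hM, rfl⟩
    obtain h | ⟨t, ht, h⟩ := doubleCoset_eq_one_or_exists hM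
    · exact .inl h
    simp only [h, doubleCoset_eq_doubleCoset_iff, (doubleCoset_one_ne t).symm, false_or]
    obtain rfl | rfl | rfl | rfl | rfl | rfl | rfl | rfl | rfl := eq_of_card_eq_nine hF hz t <;>
      grind
  · rintro (rfl | rfl | rfl | rfl | rfl | rfl) <;> refine ⟨_, ?_, rfl⟩ <;>
      simp [Matrix.det_fin_two] <;> grind

theorem ncard_doubleCosetSpace_of_card_eq_nine (hF : Fintype.card F = 9) {z : F}
    (hz : z ^ 2 = 2) : (doubleCosetSpace F).ncard = 6 := by
  have h3 := three_eq_zero_of_card_eq_nine hF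
  have hone : (1 : F) ≠ 0 := one_ne_zero
  rw [doubleCosetSpace_eq_of_card_eq_nine hF hz, Set.ncard_insert_of_notMem,
    Set.ncard_insert_of_notMem, Set.ncard_insert_of_notMem, Set.ncard_insert_of_notMem,
    Set.ncard_pair]
  all_goals simp [doubleCoset_eq_doubleCoset_iff, doubleCoset_one_ne]
  all_goals grind

end FieldOfNineElements

/-- Let `𝔽₉ = 𝔽₃[z]` with `z² = 2`, and let `S ≤ GL₂(𝔽₉)` be the subgroup
`{(a 0; 0 b), (0 a; b 0) : a, b ∈ 𝔽₉^×}`. Then `|S| = 128`, the double coset space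
`S \ GL₂(𝔽₉) / S` has exactly 6 elements represented by the identity and the matrices
`(1 a; 1 1)` for `a ∈ {0, −1, z, 1+z, 1−z}`; moreover for `M = (a b; c d)` with
`a, d ≠ 0`, either `SMS = S` (the coset of the identity) or `SMS` is the double coset
of `(1 (bc)/(ad); 1 1)`. -/
theorem stmt_19 (F : Type*) [Field F] [Fintype F] (hF : Fintype.card F = 9)
    (z : F) (hz : z ^ 2 = 2)
    (S : Set (Matrix (Fin 2) (Fin 2) F))
    (hS : S = {M | ∃ a b : F, a ≠ 0 ∧ b ≠ 0 ∧
      (M = !![a, 0; 0, b] ∨ M = !![0, a; b, 0])})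
    (m : F → Matrix (Fin 2) (Fin 2) F) (hm : m = fun a => !![1, a; 1, 1]) :
    Nat.card S = 128 ∧
    Nat.card {C : Set (Matrix (Fin 2) (Fin 2) F) |
        ∃ M : Matrix (Fin 2) (Fin 2) F, M.det ≠ 0 ∧ C = doubleCoset S M} = 6 ∧
    {C : Set (Matrix (Fin 2) (Fin 2) F) |
        ∃ M : Matrix (Fin 2) (Fin 2) F, M.det ≠ 0 ∧ C = doubleCoset S M} =
      {doubleCoset S 1, doubleCoset S (m 0), doubleCoset S (m (-1)), doubleCoset S (m z),
        doubleCoset S (m (1 + z)), doubleCoset S (m (1 - z))} ∧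
    (∀ a b c d : F, a ≠ 0 → d ≠ 0 → (!![a, b; c, d]).det ≠ 0 →
      doubleCoset S !![a, b; c, d] = doubleCoset S 1 ∨
      doubleCoset S !![a, b; c, d] = doubleCoset S (m (b * c / (a * d)))) := by
  change S = monomialMatrices F at hS
  subst hS hm
  exact ⟨by rw [card_monomialMatrices, hF]; rfl,
    by rw [Nat.card_coe_set_eq]; exact ncard_doubleCosetSpace_of_card_eq_nine hF hz,
    doubleCosetSpace_eq_of_card_eq_nine hF hz,
    fun a b c d ha hd _ => doubleCoset_eq_one_or_eq_of_ne_zero ha hd⟩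
end
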